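/- For the second-price auction on a common finite type space with n ≥ 2 bidders: for every bidder i, every pair of distinct values θ_i, θ_i' ∈ Θ, and every θ_{-i} with θ_i ≤ max_{j≠i} θ_j and θ_i' ≤ max_{j≠i} θ_j and φ^{SPA}(θ_i,θ_{-i}) = φ^{SPA}(θ_i',θ_{-i}), there exists θ_{-i}' such that {θ_i,θ_i'} × {θ_{-i},θ_{-i}'} is an indistinguishable corners condition violation for bidder i. -/
import Mathlib


namespace PrivacyPaper

open Classical in
/-- The lowest-indexed bidder with the maximum value. -/
noncomputable def lowWinner {n : ℕ} (hn : 0 < n) (θ : Fin n → ℝ) : Fin n :=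
  (Finset.univ.filter fun i => ∀ j, θ j ≤ θ i).min' (by
    haveI : Nonempty (Fin n) := ⟨⟨0, hn⟩⟩
    obtain ⟨i, hi⟩ := Finite.exists_max θ
    exact ⟨i, Finset.mem_filter.mpr ⟨Finset.mem_univ i, hi⟩⟩)

/-- The first-price auction choice rule with truthful bidding and lowest-index
tie-breaking: the winner gets the good and pays her value, losers get `(false, 0)`. -/
noncomputable def FPA {n : ℕ} (hn : 0 < n) (θ : Fin n → ℝ) : Fin n → Bool × ℝ :=
  fun j => if j = lowWinner hn θ then (true, θ j) else (false, 0)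

lemma erase_univ_nonempty {n : ℕ} (hn : 2 ≤ n) (i : Fin n) :
    ((Finset.univ : Finset (Fin n)).erase i).Nonempty := by
  rw [← Finset.card_pos, Finset.card_erase_of_mem (Finset.mem_univ _), Finset.card_univ,
    Fintype.card_fin]
  omega

/-- The highest value among bidders other than `i`. -/
noncomputable def maxOther {n : ℕ} (hn : 2 ≤ n) (i : Fin n) (θ : Fin n → ℝ) : ℝ :=
  ((Finset.univ : Finset (Fin n)).erase i).sup' (erase_univ_nonempty hn i) θ

/-- The second-price auction choice rule with lowest-index tie-breaking: the winner gets
the good and pays the highest value among the other bidders, losers get `(false, 0)`. -/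
noncomputable def SPA {n : ℕ} (hn : 2 ≤ n) (θ : Fin n → ℝ) : Fin n → Bool × ℝ :=
  fun j =>
    if j = lowWinner (by omega) θ then
      (true, maxOther hn (lowWinner (by omega : 0 < n) θ) θ)
    else (false, 0)

/-- The winner's value dominates all values. -/
lemma lowWinner_isMax {n : ℕ} (hn : 0 < n) (θ : Fin n → ℝ) :
    ∀ k, θ k ≤ θ (lowWinner hn θ) := by
  have h := Finset.min'_mem (Finset.univ.filter fun i => ∀ j, θ j ≤ θ i)
    (by
      haveI : Nonempty (Fin n) := ⟨⟨0, hn⟩⟩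
      obtain ⟨i, hi⟩ := Finite.exists_max θ
      exact ⟨i, Finset.mem_filter.mpr ⟨Finset.mem_univ i, hi⟩⟩)
  exact (Finset.mem_filter.mp h).2

/-- If `j` is the strict maximizer, it is the winner. -/
lemma lowWinner_eq_of_forall_lt {n : ℕ} (hn : 0 < n) (θ : Fin n → ℝ) (j : Fin n)
    (h : ∀ k, k ≠ j → θ k < θ j) : lowWinner hn θ = j := by
  by_contra hcon
  exact absurd (lowWinner_isMax hn θ j) (not_le.mpr (h _ hcon))

/-- If index `0` attains the maximum, it wins. -/
lemma lowWinner_eq_zero {n : ℕ} (hn : 0 < n) (θ : Fin n → ℝ)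
    (h : ∀ k, θ k ≤ θ ⟨0, hn⟩) : lowWinner hn θ = ⟨0, hn⟩ := by
  refine le_antisymm (Finset.min'_le _ _ ?_) ?_
  · exact Finset.mem_filter.mpr ⟨Finset.mem_univ _, h⟩
  · exact Fin.mk_le_of_le_val (Nat.zero_le _)

lemma maxOther_eq {n : ℕ} (hn : 2 ≤ n) (j : Fin n) (θ : Fin n → ℝ) (v : ℝ)
    (hex : ∃ k, k ≠ j ∧ θ k = v) (hub : ∀ k, k ≠ j → θ k ≤ v) :
    maxOther hn j θ = v := by
  obtain ⟨k, hk, hkv⟩ := hex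
  refine le_antisymm (Finset.sup'_le _ _ fun m hm => hub m (Finset.ne_of_mem_erase hm)) ?_
  exact hkv ▸ Finset.le_sup' θ (Finset.mem_erase.mpr ⟨hk, Finset.mem_univ _⟩)

lemma le_maxOther {n : ℕ} (hn : 2 ≤ n) (j k : Fin n) (θ : Fin n → ℝ) (hk : k ≠ j) :
    θ k ≤ maxOther hn j θ :=
  Finset.le_sup' θ (Finset.mem_erase.mpr ⟨hk, Finset.mem_univ _⟩)

lemma maxOther_attained {n : ℕ} (hn : 2 ≤ n) (j : Fin n) (θ : Fin n → ℝ) :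
    ∃ k, k ≠ j ∧ θ k = maxOther hn j θ := by
  obtain ⟨k, hk, hkv⟩ := Finset.exists_mem_eq_sup' (erase_univ_nonempty hn j) θ
  exact ⟨k, Finset.ne_of_mem_erase hk, hkv.symm⟩

lemma SPA_apply {n : ℕ} (hn : 2 ≤ n) (hn0 : 0 < n) (θ : Fin n → ℝ) (j : Fin n) :
    SPA hn θ j =
      if j = lowWinner hn0 θ then (true, maxOther hn (lowWinner hn0 θ) θ)
      else (false, 0) := rfl

/-- For the second-price auction on a common finite type space: whenever two distinct
values `a ≠ a'` of bidder `i` are both weakly below the highest competing value in column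
`t` and are not distinguished by the outcome there, some column `t'` completes an
indistinguishable-corners violation for bidder `i`. -/
theorem spa_violation_at_every_pooled_pair {n : ℕ} (hn : 2 ≤ n)
    (Θ : Finset ℝ) (hpos : ∀ x ∈ Θ, 0 ≤ x)
    (i : Fin n) (a a' : ℝ) (ha : a ∈ Θ) (ha' : a' ∈ Θ) (hne : a ≠ a')
    (t : Fin n → ℝ) (ht : ∀ j, t j ∈ Θ)
    (hmax : a ≤ maxOther hn i t) (hmax' : a' ≤ maxOther hn i t)
    (heq : SPA hn (Function.update t i a) = SPA hn (Function.update t i a')) :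
    ∃ t' : Fin n → ℝ, (∀ j, t' j ∈ Θ) ∧
      SPA hn (Function.update t i a) i = SPA hn (Function.update t' i a) i ∧
      SPA hn (Function.update t' i a) ≠ SPA hn (Function.update t' i a') := by
  have hn0 : 0 < n := by omega
  obtain ⟨js, hjsi, hjsM⟩ := maxOther_attained hn i t
  set M := maxOther hn i t with hMdef
  have hMΘ : M ∈ Θ := hjsM ▸ ht js
  -- bidder i loses in column t with value a
  have hlose : lowWinner hn0 (Function.update t i a) ≠ i := by
    intro hwin
    have haM : a = M := by
      refine le_antisymm hmax ?_
      have h := lowWinner_isMax hn0 (Function.update t i a) js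
      rw [hwin, Function.update_self, Function.update_of_ne hjsi] at h
      exact hjsM ▸ h
    have ha'M : a' < M := lt_of_le_of_ne hmax' (fun h => hne (haM ▸ h.symm ▸ rfl))
    have hlose' : lowWinner hn0 (Function.update t i a') ≠ i := by
      intro hwin'
      have h := lowWinner_isMax hn0 (Function.update t i a') js
      rw [hwin', Function.update_self, Function.update_of_ne hjsi, hjsM] at h
      exact absurd h (not_le.mpr ha'M)
    have h1 := congrFun heq i
    rw [SPA_apply hn hn0, SPA_apply hn hn0, if_pos hwin.symm,
      if_neg (fun h => hlose' h.symm)] at h1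
    exact Bool.noConfusion (congrArg Prod.fst h1)
  -- the construction
  set z : Fin n := ⟨0, hn0⟩ with hzdef
  set o : Fin n := ⟨1, by omega⟩ with hodef
  set c : ℝ := min a a' with hcdef
  have hcΘ : c ∈ Θ := by
    rcases le_total a a' with h | h
    · rw [hcdef, min_eq_left h]; exact ha
    · rw [hcdef, min_eq_right h]; exact ha'
  have hca : c ≤ a := min_le_left _ _
  have hca' : c ≤ a' := min_le_right _ _
  set j0 : Fin n := if i = z then o else z with hj0def
  have hj0i : j0 ≠ i := by
    by_cases h : i = z
    · rw [hj0def, if_pos h, h]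
      intro hc; exact absurd (congrArg Fin.val hc) (by simp [hodef, hzdef])
    · rw [hj0def, if_neg h]
      exact fun hc => h hc.symm
  refine ⟨fun k => if k = j0 then M else c, ?_, ?_, ?_⟩
  · intro k; dsimp only; split
    · exact hMΘ
    · exact hcΘ
  all_goals {
    set t' : Fin n → ℝ := fun k => if k = j0 then M else c with ht'def
    set P1 := Function.update t' i a with hP1def
    set P2 := Function.update t' i a' with hP2def
    have hP1j0 : P1 j0 = M := by
      rw [hP1def, Function.update_of_ne hj0i, ht'def]; simp
    have hP1i : P1 i = a := Function.update_self _ _ _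
    have hP1k : ∀ k, k ≠ i → k ≠ j0 → P1 k = c := by
      intro k hki hkj
      rw [hP1def, Function.update_of_ne hki, ht'def]; simp [hkj]
    have hP2j0 : P2 j0 = M := by
      rw [hP2def, Function.update_of_ne hj0i, ht'def]; simp
    have hP2i : P2 i = a' := Function.update_self _ _ _
    have hP2k : ∀ k, k ≠ i → k ≠ j0 → P2 k = c := by
      intro k hki hkj
      rw [hP2def, Function.update_of_ne hki, ht'def]; simp [hkj]
    have hP1ub : ∀ k, P1 k ≤ M := by
      intro k
      by_cases hkj : k = j0
      · rw [hkj, hP1j0]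
      · by_cases hki : k = i
        · rw [hki, hP1i]; exact hmax
        · rw [hP1k k hki hkj]; exact le_trans hca hmax
    have hP2ub : ∀ k, P2 k ≤ M := by
      intro k
      by_cases hkj : k = j0
      · rw [hkj, hP2j0]
      · by_cases hki : k = i
        · rw [hki, hP2i]; exact hmax'
        · rw [hP2k k hki hkj]; exact le_trans hca' hmax'
    -- key fact: if a = M then i ≠ z
    have hiz_of_aM : a = M → i ≠ z := by
      intro haM hiz
      refine hlose ?_
      rw [hiz]
      apply lowWinner_eq_zero
      intro k
      rw [Function.update_self]
      by_cases hk : k = z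
      · rw [hk, Function.update_self]
      · rw [Function.update_of_ne hk, haM]
        exact le_maxOther hn i k t (hiz ▸ hk)
    -- the winner in column t' with value a is j0
    have W1 : lowWinner hn0 P1 = j0 := by
      rcases lt_or_eq_of_le hmax with haM | haM
      · apply lowWinner_eq_of_forall_lt
        intro k hk
        rw [hP1j0]
        by_cases hki : k = i
        · rw [hki, hP1i]; exact haM
        · rw [hP1k k hki hk]; exact lt_of_le_of_lt hca haM
      · have hiz : i ≠ z := hiz_of_aM haM
        have hj0z : j0 = z := by rw [hj0def, if_neg hiz]
        rw [hj0z]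
        apply lowWinner_eq_zero
        intro k
        have : P1 z = M := hj0z ▸ hP1j0
        rw [hzdef] at this
        rw [this]
        exact hP1ub k
    have hSPA1 : ∀ k, SPA hn P1 k = if k = j0 then (true, a) else (false, 0) := by
      intro k
      rw [SPA_apply hn hn0, W1]
      by_cases hk : k = j0
      · rw [if_pos hk, if_pos hk]
        congr 1
        apply maxOther_eq
        · exact ⟨i, Ne.symm hj0i, hP1i⟩
        · intro m hm
          by_cases hmi : m = i
          · rw [hmi, hP1i]
          · rw [hP1k m hmi hm]; exact hca
      · rw [if_neg hk, if_neg hk]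
    first
    | -- second goal: outcomes for i agree in columns t and t'
      ( rw [SPA_apply hn hn0, if_neg (fun h => hlose h.symm), hSPA1 i,
          if_neg (fun h => hj0i h.symm)] )
    | -- third goal: the two columns t' differ
      ( intro hE
        rcases lt_or_eq_of_le hmax' with ha'M | ha'M
        · -- a' < M : winner j0 pays a' in column (a', t')
          have W2 : lowWinner hn0 P2 = j0 := by
            apply lowWinner_eq_of_forall_lt
            intro k hk
            rw [hP2j0]
            by_cases hki : k = i
            · rw [hki, hP2i]; exact ha'M
            · rw [hP2k k hki hk]; exact lt_of_le_of_lt hca' ha'M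
          have hSPA2 : SPA hn P2 j0 = (true, a') := by
            rw [SPA_apply hn hn0, W2, if_pos rfl]
            congr 1
            apply maxOther_eq
            · exact ⟨i, Ne.symm hj0i, hP2i⟩
            · intro m hm
              by_cases hmi : m = i
              · rw [hmi, hP2i]
              · rw [hP2k m hmi hm]; exact hca'
          have h := congrFun hE j0
          rw [hSPA1 j0, if_pos rfl, hSPA2] at h
          exact hne (congrArg Prod.snd h)
        · -- a' = M
          have haM : a < M := lt_of_le_of_ne hmax
            (fun h => hne (h.trans ha'M.symm ▸ rfl))
          by_cases hiz : i = z
          · -- i = 0 wins the tie in column (a', t')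
            have W2 : lowWinner hn0 P2 = z := by
              apply lowWinner_eq_zero
              intro k
              have hz : P2 z = M := by rw [← hiz, hP2i, ha'M]
              rw [hzdef] at hz
              rw [hz]
              exact hP2ub k
            have h := congrFun hE i
            rw [hSPA1 i, if_neg (fun h => hj0i h.symm),
              SPA_apply hn hn0 P2 i, if_pos (hiz.trans W2.symm)] at h
            exact Bool.noConfusion (congrArg Prod.fst h)
          · -- i ≠ 0 : winner j0 = 0 pays M = a' ≠ a in column (a', t')
            have hj0z : j0 = z := by rw [hj0def, if_neg hiz]
            have W2 : lowWinner hn0 P2 = j0 := by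
              rw [hj0z]
              apply lowWinner_eq_zero
              intro k
              have hz : P2 z = M := hj0z ▸ hP2j0
              rw [hzdef] at hz
              rw [hz]
              exact hP2ub k
            have hSPA2 : SPA hn P2 j0 = (true, M) := by
              rw [SPA_apply hn hn0, W2, if_pos rfl]
              congr 1
              apply maxOther_eq
              · exact ⟨i, Ne.symm hj0i, hP2i.trans ha'M⟩
              · intro m _; exact hP2ub m
            have h := congrFun hE j0
            rw [hSPA1 j0, if_pos rfl, hSPA2] at h
            exact absurd (congrArg Prod.snd h) (ne_of_lt haM) ) }

end PrivacyPaper
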